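/- arXiv:2604.13855 — 2 statements merged into one kernel-verified Lean document; each statement's English description precedes it below -/
import Mathlib

section
/- Let s ∈ (0,1) and let φ: R → [0,∞) be a smooth nonnegative function. Then there exists a constant C_s > 0 (depending only on s) such that |(φ^{1/(1+s)})'(0)|^{2(1+s)} ≤ C_s (φ(0)^2 + W^2), where W^2 = ∫_{−π/2}^{π/2} |φ'(θ) − φ'(0)|^2 |θ|^{−1−2s} dθ. -/
open MeasureTheory Real

private lemma amgm162 (u v ε : ℝ) (hε : 0 < ε) : u * v ≤ ε/2 * u^2 + 1/(2*ε) * v^2 := by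
  have key : (2*ε)*(u*v) ≤ (2*ε)*(ε/2*u^2 + 1/(2*ε)*v^2) := by
    have h : (2*ε)*(ε/2*u^2 + 1/(2*ε)*v^2) = ε^2*u^2 + v^2 := by
      field_simp
    rw [h]; nlinarith [sq_nonneg (ε*u - v)]
  exact le_of_mul_le_mul_left key (by positivity)

private lemma amgm2 (u w ε p : ℝ) (hw : 0 < w) (hε : 0 < ε) :
    u ≤ ε/2 * (u^2 * w^(-p)) + 1/(2*ε) * w^p := by
  have hv : (0:ℝ) < w^p := Real.rpow_pos_of_pos hw _
  have hneg : w^(-p) = (w^p)⁻¹ := Real.rpow_neg hw.le p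
  rw [hneg, ← mul_le_mul_iff_left₀ hv]
  calc u * w^p ≤ ε/2 * u^2 + 1/(2*ε) * (w^p)^2 := amgm162 u (w^p) ε hε
    _ = (ε/2 * (u^2 * (w^p)⁻¹) + 1/(2*ε) * w^p) * w^p := by field_simp

private lemma keyA (s : ℝ) (hs0 : 0 < s) (φ : ℝ → ℝ) (hφ : ContDiff ℝ (⊤ : ℕ∞) φ)
    (hpos : ∀ x, 0 < φ x)
    (hint : IntegrableOn (fun θ => (deriv φ θ - deriv φ 0) ^ 2 * |θ| ^ (-1 - 2 * s))
      (Set.Ioo (-(π / 2)) (π / 2)))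
    (r : ℝ) (hr0 : 0 < r) (hr : r < π/2) (ε : ℝ) (hε : 0 < ε) :
    |deriv φ 0| * r ≤ φ 0 + ε/2 * (∫ θ in Set.Ioo (-(π / 2)) (π / 2),
        (deriv φ θ - deriv φ 0) ^ 2 * |θ| ^ (-1 - 2 * s)) + 1/ε * r^(2+2*s) := by
  set b := deriv φ 0 with hb
  set g := fun t : ℝ => (deriv φ t - b)^2 * |t|^(-1-2*s) with hg
  have hdc : Continuous (deriv φ) := hφ.continuous_deriv (by simp)
  have hdiff : Differentiable ℝ φ := hφ.differentiable (by simp)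
  have habsc : Continuous fun t => |deriv φ t - b| := (hdc.sub continuous_const).abs
  set J := ∫ t in Set.Ioo (-r) r, |deriv φ t - b| with hJ
  have hJint : IntegrableOn (fun t => |deriv φ t - b|) (Set.Ioo (-r) r) :=
    (habsc.integrableOn_Icc (μ := volume)).mono_set Set.Ioo_subset_Icc_self
  have hsub : Set.Ioo (-r) r ⊆ Set.Ioo (-(π/2)) (π/2) :=
    Set.Ioo_subset_Ioo (by linarith) (by linarith)
  have ftc : ∀ c d : ℝ, ∫ t in c..d, deriv φ t = φ d - φ c := fun c d =>
    intervalIntegral.integral_deriv_eq_sub (fun x _ => hdiff x) (hdc.intervalIntegrable c d)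
  have e1 : ∫ t in (0:ℝ)..r, (deriv φ t - b) = φ r - φ 0 - b * r := by
    rw [intervalIntegral.integral_sub (hdc.intervalIntegrable 0 r) intervalIntegrable_const,
      ftc 0 r, intervalIntegral.integral_const, smul_eq_mul]
    ring
  have e2 : ∫ t in (-r)..(0:ℝ), (deriv φ t - b) = φ 0 - φ (-r) - b * r := by
    rw [intervalIntegral.integral_sub (hdc.intervalIntegrable _ _) intervalIntegrable_const,
      ftc (-r) 0, intervalIntegral.integral_const, smul_eq_mul]
    ring
  have j1 : ∫ t in (0:ℝ)..r, |deriv φ t - b| ≤ J := by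
    rw [intervalIntegral.integral_of_le hr0.le, integral_Ioc_eq_integral_Ioo]
    exact setIntegral_mono_set hJint (Filter.Eventually.of_forall fun t => abs_nonneg _)
      ((Set.Ioo_subset_Ioo (by linarith) le_rfl).eventuallyLE)
  have j2 : ∫ t in (-r)..(0:ℝ), |deriv φ t - b| ≤ J := by
    rw [intervalIntegral.integral_of_le (by linarith), integral_Ioc_eq_integral_Ioo]
    exact setIntegral_mono_set hJint (Filter.Eventually.of_forall fun t => abs_nonneg _)
      ((Set.Ioo_subset_Ioo le_rfl (by linarith)).eventuallyLE)
  have habs1 : |φ r - φ 0 - b * r| ≤ J := by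
    rw [← e1]
    exact le_trans (intervalIntegral.abs_integral_le_integral_abs hr0.le) j1
  have habs2 : |φ 0 - φ (-r) - b * r| ≤ J := by
    rw [← e2]
    exact le_trans (intervalIntegral.abs_integral_le_integral_abs (by linarith)) j2
  have A1 : |b| * r ≤ φ 0 + J := by
    have h1 := abs_le.mp habs1
    have h2 := abs_le.mp habs2
    have hφr := (hpos r).le
    have hφmr := (hpos (-r)).le
    have habr : |b * r| ≤ φ 0 + J :=
      abs_le.mpr ⟨by linarith [h1.2], by linarith [h2.1]⟩
    rwa [abs_mul, abs_of_nonneg hr0.le] at habr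
  have hbnd : ∀ t ∈ Set.Ioo (-r) r,
      |deriv φ t - b| ≤ ε/2 * g t + 1/(2*ε) * r^(1+2*s) := by
    intro t ht
    rcases eq_or_ne t 0 with rfl | h0
    · have hz : |deriv φ 0 - b| = 0 := by rw [hb]; simp
      rw [hz]
      have : 0 ≤ g 0 := by simp only [hg]; positivity
      have : 0 ≤ 1/(2*ε) * r^(1+2*s) := by positivity
      positivity
    · have hw : 0 < |t| := abs_pos.mpr h0
      have h1 := amgm2 |deriv φ t - b| |t| ε (1+2*s) hw hε
      rw [sq_abs, show -(1+2*s) = -1-2*s by ring] at h1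
      have h2 : |t|^(1+2*s) ≤ r^(1+2*s) := by
        apply Real.rpow_le_rpow (abs_nonneg t) _ (by linarith)
        exact le_of_lt (abs_lt.mpr ⟨ht.1, ht.2⟩)
      have h3 : 1/(2*ε) * |t|^(1+2*s) ≤ 1/(2*ε) * r^(1+2*s) :=
        mul_le_mul_of_nonneg_left h2 (by positivity)
      simp only [hg]
      linarith
  have hgint : IntegrableOn g (Set.Ioo (-r) r) := hint.mono_set hsub
  have hcint : IntegrableOn (fun _ : ℝ => 1/(2*ε) * r^(1+2*s)) (Set.Ioo (-r) r) :=
    integrableOn_const measure_Ioo_lt_top.ne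
  have hRint : IntegrableOn (fun t => ε/2 * g t + 1/(2*ε) * r^(1+2*s)) (Set.Ioo (-r) r) :=
    (hgint.const_mul _).add hcint
  have hmono : J ≤ ∫ t in Set.Ioo (-r) r, (ε/2 * g t + 1/(2*ε) * r^(1+2*s)) :=
    setIntegral_mono_on hJint hRint measurableSet_Ioo hbnd
  have hsplit : ∫ t in Set.Ioo (-r) r, (ε/2 * g t + 1/(2*ε) * r^(1+2*s))
      = ε/2 * (∫ t in Set.Ioo (-r) r, g t) + (1/(2*ε) * r^(1+2*s)) * (2*r) := by
    rw [integral_add (hgint.const_mul _) hcint, integral_const_mul, setIntegral_const,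
      Real.volume_real_Ioo_of_le (by linarith), smul_eq_mul]
    ring
  have hgle : ∫ t in Set.Ioo (-r) r, g t ≤ ∫ θ in Set.Ioo (-(π/2)) (π/2), g θ :=
    setIntegral_mono_set hint
      (Filter.Eventually.of_forall fun t => by simp only [hg]; positivity)
      hsub.eventuallyLE
  have hgle' : ε/2 * (∫ t in Set.Ioo (-r) r, g t) ≤ ε/2 * ∫ θ in Set.Ioo (-(π/2)) (π/2), g θ :=
    mul_le_mul_of_nonneg_left hgle (by positivity)
  have hRR : r^(2+2*s) = r^(1+2*s) * r := by
    rw [show (2+2*s) = (1+2*s)+1 by ring, Real.rpow_add hr0, Real.rpow_one]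
  have hrr : (1/(2*ε) * r^(1+2*s)) * (2*r) = 1/ε * r^(2+2*s) := by
    rw [hRR]; field_simp
  calc |b| * r ≤ φ 0 + J := A1
    _ ≤ φ 0 + (ε/2 * (∫ t in Set.Ioo (-r) r, g t) + (1/(2*ε) * r^(1+2*s)) * (2*r)) := by
        rw [← hsplit]; linarith
    _ ≤ φ 0 + ε/2 * (∫ θ in Set.Ioo (-(π/2)) (π/2), g θ) + 1/ε * r^(2+2*s) := by
        rw [← hrr]; linarith

set_option maxHeartbeats 1600000 in
/-- Let `s ∈ (0,1)`. There is a constant `C_s > 0` (depending only on `s`) such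
that for every smooth positive `φ : ℝ → ℝ` with
`W² = ∫_{−π/2}^{π/2} |φ'(θ) − φ'(0)|² |θ|^{−1−2s} dθ` finite, one has
`|(φ^{1/(1+s)})'(0)|^{2(1+s)} ≤ C_s (φ(0)² + W²)`, where `(φ^{1/(1+s)})'(0)`
is interpreted as `(1/(1+s)) φ'(0) φ(0)^{1/(1+s) − 1}`. -/
theorem stmt10 (s : ℝ) (hs : s ∈ Set.Ioo (0 : ℝ) 1) :
    ∃ C : ℝ, 0 < C ∧ ∀ φ : ℝ → ℝ, ContDiff ℝ (⊤ : ℕ∞) φ → (∀ x, 0 < φ x) →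
      IntegrableOn (fun θ => (deriv φ θ - deriv φ 0) ^ 2 * |θ| ^ (-1 - 2 * s))
        (Set.Ioo (-(π / 2)) (π / 2)) →
      |(1 / (1 + s)) * deriv φ 0 * φ 0 ^ (1 / (1 + s) - 1)| ^ (2 * (1 + s))
        ≤ C * ((φ 0) ^ 2
            + ∫ θ in Set.Ioo (-(π / 2)) (π / 2),
                (deriv φ θ - deriv φ 0) ^ 2 * |θ| ^ (-1 - 2 * s)) := by
  obtain ⟨hs0, hs1⟩ := hs
  have h1s : (0:ℝ) < 1 + s := by linarith
  refine ⟨162, by norm_num, ?_⟩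
  intro φ hφ hpos hint
  set b := deriv φ 0 with hb
  set a := φ 0 with ha'
  set I := ∫ θ in Set.Ioo (-(π/2)) (π/2), (deriv φ θ - b)^2 * |θ|^(-1-2*s) with hIdef
  have ha : 0 < a := hpos 0
  have hI0 : 0 ≤ I := setIntegral_nonneg measurableSet_Ioo (fun t _ => by positivity)
  set W := Real.sqrt I with hWdef
  have hW0 : 0 ≤ W := Real.sqrt_nonneg I
  have hWsq : W^2 = I := Real.sq_sqrt hI0
  -- Key inequality for all radii
  have keyr : ∀ r, 0 < r → r < π/2 → |b| * r ≤ a + 3/2 * (r^(1+s) * W) := by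
    intro r hr0 hr
    rcases eq_or_lt_of_le hW0 with hW | hW
    · have hIz : I = 0 := by rw [← hWsq, ← hW]; ring
      have h2 : |b| * r ≤ a := by
        refine le_of_forall_pos_le_add (fun c hc => ?_)
        have hε : 0 < r^(2+2*s) / c := by positivity
        have h := keyA s hs0 φ hφ hpos hint r hr0 hr _ hε
        rw [← hIdef, hIz] at h
        calc |b| * r ≤ a + (r^(2+2*s)/c)/2 * 0 + 1/(r^(2+2*s)/c) * r^(2+2*s) := h
          _ = a + c := by
              have hne : r^(2+2*s) ≠ 0 := by positivity
              field_simp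
              ring
      have : 0 ≤ 3/2 * (r^(1+s) * W) := by positivity
      linarith
    · have hε : 0 < r^(1+s)/W := by positivity
      have h := keyA s hs0 φ hφ hpos hint r hr0 hr _ hε
      rw [← hIdef] at h
      have hWne : W ≠ 0 := ne_of_gt hW
      have hrne : r^(1+s) ≠ 0 := by positivity
      have hRR : r^(2+2*s) = r^(1+s) * r^(1+s) := by
        rw [show (2+2*s) = (1+s)+(1+s) by ring, Real.rpow_add hr0]
      have alg : ∀ R V : ℝ, R ≠ 0 → V ≠ 0 →
          (R/V)/2*V^2 + 1/(R/V)*(R*R) = 3/2*(R*V) := by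
        intro R V hR hV; field_simp; ring
      have hval : (r^(1+s)/W)/2 * I + 1/(r^(1+s)/W) * r^(2+2*s) = 3/2 * (r^(1+s) * W) := by
        rw [← hWsq, hRR]
        exact alg _ _ hrne hWne
      linarith [h, hval.le, hval.ge]
  clear_value b a I W
  clear hint hb ha' hIdef hWdef
  -- Choice of radius
  have haW : 0 < a + W := by linarith
  set t0 := (a/(a+W))^(1/(1+s)) with ht0
  have hdivpos : 0 < a/(a+W) := div_pos ha haW
  have ht0pos : 0 < t0 := Real.rpow_pos_of_pos hdivpos _
  have ht0le : t0 ≤ 1 := by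
    apply Real.rpow_le_one hdivpos.le _ (by positivity)
    rw [div_le_one haW]; linarith
  set r := π/4 * t0 with hrdef
  have hr0 : 0 < r := by
    have := pi_pos
    positivity
  have hrlt : r < π/2 := by
    have hp := pi_pos
    rw [hrdef]
    nlinarith
  set M := a^(s/(1+s)) * (a+W)^(1/(1+s)) with hMdef
  have hM : 0 < M := by positivity
  have haWe : (0:ℝ) < (a+W)^(1/(1+s)) := by positivity
  -- Fact 1 : M * t0 = a
  have e1 : a ^ (s/(1+s)) * a^(1/(1+s)) = a := by
    rw [← Real.rpow_add ha, show s/(1+s)+1/(1+s) = 1 by rw [← add_div, add_comm s 1, div_self (ne_of_gt h1s)], Real.rpow_one]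
  have fact1 : M * t0 = a := by
    rw [hMdef, ht0, Real.div_rpow ha.le haW.le]
    calc a^(s/(1+s)) * (a+W)^(1/(1+s)) * (a^(1/(1+s)) / (a+W)^(1/(1+s)))
        = (a^(s/(1+s)) * a^(1/(1+s))) * ((a+W)^(1/(1+s)) / (a+W)^(1/(1+s))) := by ring
      _ = a := by rw [div_self (ne_of_gt haWe), e1, mul_one]
  -- Fact 2 : r^s * W ≤ M
  have fact2 : r^s * W ≤ M := by
    have hpi4 : (π/4)^s ≤ 1 :=
      Real.rpow_le_one (by positivity) (by linarith [pi_le_four]) hs0.le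
    have ht0s : t0^s = a^(s/(1+s)) / (a+W)^(s/(1+s)) := by
      rw [ht0, ← Real.rpow_mul hdivpos.le, show 1/(1+s)*s = s/(1+s) by ring,
        Real.div_rpow ha.le haW.le]
    have hWle : W / (a+W)^(s/(1+s)) ≤ (a+W)^(1/(1+s)) := by
      rw [div_le_iff₀ (by positivity)]
      calc W ≤ a + W := by linarith
        _ = (a+W)^(1/(1+s)) * (a+W)^(s/(1+s)) := by
            rw [← Real.rpow_add haW, show 1/(1+s)+s/(1+s) = 1 by rw [← add_div, div_self (ne_of_gt h1s)], Real.rpow_one]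
    calc r^s * W = (π/4)^s * t0^s * W := by
          rw [hrdef, Real.mul_rpow (by positivity) ht0pos.le]
      _ ≤ 1 * t0^s * W := by
          have h1 : 0 ≤ t0^s := by positivity
          exact mul_le_mul_of_nonneg_right (mul_le_mul_of_nonneg_right hpi4 h1) hW0
      _ = a^(s/(1+s)) * (W / (a+W)^(s/(1+s))) := by rw [one_mul, ht0s]; ring
      _ ≤ a^(s/(1+s)) * (a+W)^(1/(1+s)) :=
          mul_le_mul_of_nonneg_left hWle (by positivity)
      _ = M := hMdef.symm
  -- |b| ≤ 3 M
  have hrs : r^(1+s) = r * r^s := by rw [Real.rpow_add hr0, Real.rpow_one]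
  have ht0r : t0 = 4/π * r := by
    rw [hrdef]
    field_simp
  have hB : |b| ≤ 3 * M := by
    have hterm : 3/2*(r^(1+s)*W) ≤ 3/2*(M*r) := by
      rw [hrs]
      have h1 : r * r^s * W = r * (r^s*W) := by ring
      rw [h1]
      have h2 := mul_le_mul_of_nonneg_left fact2 hr0.le
      nlinarith [h2]
    have hA : a ≤ 4/π * (M * r) := by
      rw [← fact1, ht0r]
      exact le_of_eq (by ring)
    have hpi : 4/π ≤ 3/2 := by
      rw [div_le_iff₀ pi_pos]
      nlinarith [pi_gt_three]
    have h3 : |b| * r ≤ (3*M) * r := by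
      calc |b| * r ≤ a + 3/2*(r^(1+s)*W) := keyr r hr0 hrlt
        _ ≤ 4/π*(M*r) + 3/2*(M*r) := by linarith
        _ ≤ (3*M)*r := by nlinarith [hM, hr0, hpi, mul_pos hM hr0]
    exact le_of_mul_le_mul_right h3 hr0
  -- Final computation
  have hp0 : (0:ℝ) ≤ 2*(1+s) := by linarith
  have hae : 0 < a ^ (1/(1+s)-1) := Real.rpow_pos_of_pos ha _
  have habsX : |1/(1+s) * b * a^(1/(1+s)-1)| = 1/(1+s) * |b| * a^(1/(1+s)-1) := by
    rw [abs_mul, abs_mul, abs_of_nonneg (le_of_lt (by positivity : (0:ℝ) < 1/(1+s))),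
      abs_of_nonneg hae.le]
  have hX1 : |1/(1+s) * b * a^(1/(1+s)-1)| ≤ 3*M*a^(1/(1+s)-1) := by
    rw [habsX]
    have h1 : 1/(1+s) ≤ 1 := by rw [div_le_one h1s]; linarith
    have h2 : 1/(1+s) * |b| ≤ 1 * (3*M) :=
      mul_le_mul h1 hB (abs_nonneg b) (by norm_num)
    have h3 := mul_le_mul_of_nonneg_right h2 hae.le
    calc 1/(1+s) * |b| * a^(1/(1+s)-1) ≤ 1*(3*M) * a^(1/(1+s)-1) := h3
      _ = 3*M*a^(1/(1+s)-1) := by ring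
  have hmono : |1/(1+s) * b * a^(1/(1+s)-1)| ^ (2*(1+s)) ≤ (3*M*a^(1/(1+s)-1))^(2*(1+s)) :=
    Real.rpow_le_rpow (abs_nonneg _) hX1 hp0
  have hsplit : (3*M*a^(1/(1+s)-1))^(2*(1+s))
      = (3:ℝ)^(2*(1+s)) * M^(2*(1+s)) * (a^(1/(1+s)-1))^(2*(1+s)) := by
    rw [Real.mul_rpow (by positivity) (Real.rpow_nonneg ha.le _),
      Real.mul_rpow (by norm_num) hM.le]
  have h3p : (3:ℝ)^(2*(1+s)) ≤ 81 := by
    have h34 : (3:ℝ)^(4:ℝ) = 81 := by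
      rw [show (4:ℝ) = ((4:ℕ):ℝ) by norm_num, Real.rpow_natCast]; norm_num
    calc (3:ℝ)^(2*(1+s)) ≤ (3:ℝ)^(4:ℝ) :=
          Real.rpow_le_rpow_of_exponent_le (by norm_num) (by linarith)
      _ = 81 := h34
  have haW2 : (a+W)^((2:ℕ):ℝ) = (a+W)^(2:ℕ) := Real.rpow_natCast (a+W) 2
  have hMp : M^(2*(1+s)) = a^(2*s) * (a+W)^2 := by
    rw [hMdef, Real.mul_rpow (by positivity) (by positivity),
      ← Real.rpow_mul ha.le, ← Real.rpow_mul haW.le,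
      show s/(1+s)*(2*(1+s)) = 2*s by field_simp,
      show 1/(1+s)*(2*(1+s)) = ((2:ℕ):ℝ) by push_cast; field_simp,
      haW2]
  have hep : (a^(1/(1+s)-1))^(2*(1+s)) = a^(-(2*s)) := by
    rw [← Real.rpow_mul ha.le, show (1/(1+s)-1)*(2*(1+s)) = -(2*s) by field_simp; ring]
  have hprod : a^(2*s) * a^(-(2*s)) = 1 := by
    rw [← Real.rpow_add ha]; norm_num
  calc |1/(1+s) * b * a^(1/(1+s)-1)| ^ (2*(1+s))
      ≤ (3:ℝ)^(2*(1+s)) * M^(2*(1+s)) * (a^(1/(1+s)-1))^(2*(1+s)) := by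
        rw [← hsplit]; exact hmono
    _ = (3:ℝ)^(2*(1+s)) * ((a+W)^2 * (a^(2*s) * a^(-(2*s)))) := by
        rw [hMp, hep]; ring
    _ = (3:ℝ)^(2*(1+s)) * (a+W)^2 := by rw [hprod, mul_one]
    _ ≤ 81 * (a+W)^2 := mul_le_mul_of_nonneg_right h3p (sq_nonneg _)
    _ ≤ 162 * (a^2 + I) := by nlinarith [sq_nonneg (a - W), hWsq]
end

section
/- Let f be a smooth, positive, rapidly decaying probability density on R^3 (so that all integrals converge and integration by parts is justified) with finite Fisher information I(f) = ∫ |∇ log f|^2 f, and let a(x) = |x|^2 Id − x⊗x. Then ∫_{v≠w} f(v) f(w) a(v−w) : (∇_v log f(v) − ∇_w log f(w))⊗2 dv dw = 2 ∫∫ f(v) f(w) a(v−w) : (∇ log f(v))⊗2 dv dw − 12. -/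
open MeasureTheory

noncomputable section

/-- The gradient of `log f`. -/
def gradLog (f : EuclideanSpace ℝ (Fin 3) → ℝ) (v : EuclideanSpace ℝ (Fin 3)) :
    EuclideanSpace ℝ (Fin 3) :=
  gradient (fun y => Real.log (f y)) v

/-- `a(x) : X ⊗ X` where `a(x) = |x|² Id − x ⊗ x`. -/
def aForm (x X : EuclideanSpace ℝ (Fin 3)) : ℝ :=
  ‖x‖ ^ 2 * ‖X‖ ^ 2 - (inner ℝ x X : ℝ) ^ 2

namespace Stmt19Aux

open SchwartzMap

abbrev E3 := EuclideanSpace ℝ (Fin 3)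

def ee (i : Fin 3) : E3 := EuclideanSpace.single i (1:ℝ)

def pj (k : Fin 3) : E3 →L[ℝ] ℝ := EuclideanSpace.proj k

lemma pj_apply (k : Fin 3) (x : E3) : pj k x = x k := rfl

lemma pj_ee (k i : Fin 3) : pj k (ee i) = if k = i then 1 else 0 := by
  simp [pj, ee, EuclideanSpace.single_apply]

lemma hcont_coord (k : Fin 3) : Continuous fun w : E3 => w k := (pj k).continuous

lemma coord_abs_le (x : E3) (i : Fin 3) : |x i| ≤ ‖x‖ := by
  have h := abs_real_inner_le_norm (ee i) x
  simpa [ee, EuclideanSpace.inner_single_left, EuclideanSpace.norm_single] using h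

lemma norm_sq_coords (x : E3) : ‖x‖^2 = ∑ k, (x k)^2 := by
  rw [EuclideanSpace.norm_eq, Real.sq_sqrt (by positivity)]
  simp [sq_abs]

lemma inner_coords (x y : E3) : (inner ℝ x y : ℝ) = ∑ k, x k * y k := by
  simp [PiLp.inner_apply, mul_comm]

lemma sub_apply' (v w : E3) (k : Fin 3) : (v - w) k = v k - w k := rfl

lemma qbound (v w : E3) (k : Fin 3) : |v k - w k| ≤ (1 + ‖v‖) * (1 + ‖w‖) := by
  have h1 := coord_abs_le v k
  have h2 := coord_abs_le w k
  have h3 : (0:ℝ) ≤ ‖v‖ := norm_nonneg v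
  have h4 : (0:ℝ) ≤ ‖w‖ := norm_nonneg w
  nlinarith [abs_sub (v k) (w k)]

lemma grad_coord (f : E3 → ℝ) (v : E3) (i : Fin 3) :
    gradient f v i = fderiv ℝ f v (ee i) := by
  have : (inner ℝ (gradient f v) (ee i) : ℝ) = fderiv ℝ f v (ee i) := by
    rw [gradient]; exact InnerProductSpace.toDual_symm_apply
  rw [← this, ee, EuclideanSpace.inner_single_right]
  simp

lemma smul_gradLog (f : E3 → ℝ) (hsmooth : ContDiff ℝ (⊤ : ℕ∞) f) (hpos : ∀ v, 0 < f v) (v : E3) :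
    f v • gradLog f v = gradient f v := by
  have hd : HasFDerivAt f (fderiv ℝ f v) v := (hsmooth.differentiable (by simp) v).hasFDerivAt
  have hlog : HasFDerivAt (fun y => Real.log (f y)) ((f v)⁻¹ • fderiv ℝ f v) v :=
    (Real.hasDerivAt_log (hpos v).ne').comp_hasFDerivAt v hd
  rw [gradLog, gradient, gradient, hlog.fderiv, _root_.map_smul]
  rw [smul_smul, mul_inv_cancel₀ (hpos v).ne', one_smul]

/-! ### the vector field `c` and its derivative -/

/-- `c_i(w) = |v-w|² a_i - ⟨v-w, a⟩ (v-w)_i` in coordinates. -/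
def cfun (v a : E3) (i : Fin 3) (w : E3) : ℝ :=
  (∑ k, (v k - w k)^2) * a i - (∑ k, (v k - w k) * a k) * (v i - w i)

/-- the total derivative of `cfun v a i` at `w`. -/
def cD (v a : E3) (i : Fin 3) (w : E3) : E3 →L[ℝ] ℝ :=
  (a i) • (∑ k, ((v k - w k) • -(pj k) + (v k - w k) • -(pj k)))
    - ((∑ k, (v k - w k) * a k) • -(pj i)
        + (v i - w i) • (∑ k, (a k) • -(pj k)))

lemma hasFDerivAt_coordsub (v : E3) (k : Fin 3) (w : E3) :
    HasFDerivAt (fun w : E3 => v k - w k) (-(pj k)) w := by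
  have : (fun w : E3 => w k) = pj k := rfl
  exact HasFDerivAt.const_sub (by rw [this]; exact (pj k).hasFDerivAt) (v k)

lemma hasFDerivAt_cfun (v a : E3) (i : Fin 3) (w : E3) :
    HasFDerivAt (cfun v a i) (cD v a i w) w := by
  have h1 : HasFDerivAt (fun w : E3 => ∑ k, (v k - w k)^2)
      (∑ k, ((v k - w k) • -(pj k) + (v k - w k) • -(pj k))) w :=
    HasFDerivAt.fun_sum fun k _ => by
      simpa [pow_two] using (hasFDerivAt_coordsub v k w).fun_mul (hasFDerivAt_coordsub v k w)
  have h2 : HasFDerivAt (fun w : E3 => ∑ k, (v k - w k) * a k)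
      (∑ k, (a k) • -(pj k)) w :=
    HasFDerivAt.fun_sum fun k _ => (hasFDerivAt_coordsub v k w).mul_const (a k)
  exact (h1.mul_const (a i)).sub (h2.mul (hasFDerivAt_coordsub v i w))

lemma cD_apply (v a : E3) (i j : Fin 3) (w : E3) :
    cD v a i w (ee j)
      = -(2 * (v j - w j) * a i) + a j * (v i - w i)
        + (∑ k, (v k - w k) * a k) * (if i = j then 1 else 0) := by
  unfold cD
  simp only [ContinuousLinearMap.sub_apply, ContinuousLinearMap.add_apply,
    ContinuousLinearMap.smul_apply, ContinuousLinearMap.sum_apply,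
    ContinuousLinearMap.neg_apply, pj_ee, smul_eq_mul]
  fin_cases i <;> fin_cases j <;> simp [Fin.sum_univ_three] <;> ring

lemma cfun_fderiv_apply (v a : E3) (i j : Fin 3) (w : E3) :
    fderiv ℝ (cfun v a i) w (ee j)
      = -(2 * (v j - w j) * a i) + a j * (v i - w i)
        + (∑ k, (v k - w k) * a k) * (if i = j then 1 else 0) := by
  rw [(hasFDerivAt_cfun v a i w).fderiv, cD_apply]

lemma cfun_div (v a : E3) (w : E3) :
    ∑ i, cD v a i w (ee i) = 2 * ∑ k, (v k - w k) * a k := by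
  simp only [cD_apply]
  simp [Fin.sum_univ_three]
  ring

lemma cfun_continuous (v a : E3) (i : Fin 3) : Continuous (cfun v a i) :=
  continuous_iff_continuousAt.2 fun w => (hasFDerivAt_cfun v a i w).continuousAt

lemma cD_continuous (v a : E3) (i j : Fin 3) :
    Continuous fun w : E3 => cD v a i w (ee j) := by
  simp only [cD_apply]
  have hsum : Continuous fun w : E3 => ∑ k, (v k - w k) * a k :=
    continuous_finset_sum _ fun k _ => (continuous_const.sub (hcont_coord k)).mul continuous_const
  exact ((((continuous_const.mul (continuous_const.sub (hcont_coord j))).mul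
    continuous_const).neg.add
      (continuous_const.mul (continuous_const.sub (hcont_coord i)))).add
        (hsum.mul continuous_const))

lemma cfun_bound (v a : E3) (i : Fin 3) (w : E3) :
    |cfun v a i w| ≤ (6 * ‖a‖ * (1 + ‖v‖)^2) * (1 + ‖w‖)^2 := by
  have hM := qbound v w
  have ha := coord_abs_le a
  set M := (1 + ‖v‖) * (1 + ‖w‖) with hMdef
  have hM1 : (1:ℝ) ≤ M := by
    have := norm_nonneg v; have := norm_nonneg w; nlinarith
  have h1 : |∑ k, (v k - w k)^2| ≤ 3 * M^2 := by
    rw [Fin.sum_univ_three]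
    have e : ∀ k, (v k - w k)^2 ≤ M^2 := fun k => by
      rw [← sq_abs]; exact pow_le_pow_left₀ (abs_nonneg _) (hM k) 2
    rw [abs_of_nonneg (by positivity)]
    nlinarith [e 0, e 1, e 2]
  have h2 : |∑ k, (v k - w k) * a k| ≤ 3 * M * ‖a‖ := by
    rw [Fin.sum_univ_three]
    have e : ∀ k, |(v k - w k) * a k| ≤ M * ‖a‖ := fun k => by
      rw [abs_mul]
      exact mul_le_mul (hM k) (ha k) (abs_nonneg _) (by nlinarith)
    calc |_ + _ + _| ≤ |(v 0 - w 0) * a 0| + |(v 1 - w 1) * a 1| + |(v 2 - w 2) * a 2| :=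
          abs_add_three _ _ _
      _ ≤ 3 * M * ‖a‖ := by nlinarith [e 0, e 1, e 2]
  have t : |cfun v a i w|
      ≤ |∑ k, (v k - w k)^2| * |a i| + |∑ k, (v k - w k) * a k| * |v i - w i| := by
    unfold cfun; rw [← abs_mul, ← abs_mul]; exact abs_sub _ _
  have b1 : |∑ k, (v k - w k)^2| * |a i| ≤ 3 * M^2 * ‖a‖ :=
    mul_le_mul h1 (ha i) (abs_nonneg _) (by positivity)
  have b2 : |∑ k, (v k - w k) * a k| * |v i - w i| ≤ 3 * M * ‖a‖ * M :=
    mul_le_mul h2 (hM i) (abs_nonneg _) (by positivity)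
  have he : (6 * ‖a‖ * (1 + ‖v‖)^2) * (1 + ‖w‖)^2 = 6 * M^2 * ‖a‖ := by rw [hMdef]; ring
  rw [he]; nlinarith [t]

lemma cD_bound (v a : E3) (i j : Fin 3) (w : E3) :
    |cD v a i w (ee j)| ≤ (6 * ‖a‖ * (1 + ‖v‖)) * (1 + ‖w‖) := by
  rw [cD_apply]
  have hM := qbound v w
  have ha := coord_abs_le a
  set M := (1 + ‖v‖) * (1 + ‖w‖) with hMdef
  have hM1 : (1:ℝ) ≤ M := by
    have := norm_nonneg v; have := norm_nonneg w; nlinarith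
  have h2 : |∑ k, (v k - w k) * a k| ≤ 3 * M * ‖a‖ := by
    rw [Fin.sum_univ_three]
    have e : ∀ k, |(v k - w k) * a k| ≤ M * ‖a‖ := fun k => by
      rw [abs_mul]
      exact mul_le_mul (hM k) (ha k) (abs_nonneg _) (by nlinarith)
    calc |_ + _ + _| ≤ |(v 0 - w 0) * a 0| + |(v 1 - w 1) * a 1| + |(v 2 - w 2) * a 2| :=
          abs_add_three _ _ _
      _ ≤ 3 * M * ‖a‖ := by nlinarith [e 0, e 1, e 2]
  have ha0 : (0:ℝ) ≤ ‖a‖ := norm_nonneg a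
  calc |_ + _ + _| ≤ |(-(2 * (v j - w j) * a i))| + |a j * (v i - w i)|
        + |(∑ k, (v k - w k) * a k) * (if i = j then 1 else 0)| := abs_add_three _ _ _
    _ ≤ 2 * M * ‖a‖ + ‖a‖ * M + 3 * M * ‖a‖ := by
        have e1 : |(-(2 * (v j - w j) * a i))| ≤ 2 * M * ‖a‖ := by
          rw [abs_neg, abs_mul, abs_mul, abs_two]
          nlinarith [hM j, ha i, abs_nonneg (v j - w j), abs_nonneg (a i)]
        have e2 : |a j * (v i - w i)| ≤ ‖a‖ * M := by
          rw [abs_mul]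
          exact mul_le_mul (ha j) (hM i) (abs_nonneg _) ha0
        have e3 : |(∑ k, (v k - w k) * a k) * (if i = j then 1 else 0)| ≤ 3 * M * ‖a‖ := by
          rw [abs_mul]
          have hle : |(if i = j then (1:ℝ) else 0)| ≤ 1 := by split <;> simp
          nlinarith [h2, abs_nonneg (∑ k, (v k - w k) * a k),
            abs_nonneg (if i = j then (1:ℝ) else 0)]
        linarith
    _ ≤ (6 * ‖a‖ * (1 + ‖v‖)) * (1 + ‖w‖) := by rw [hMdef] at *; nlinarith


lemma aForm_even (x X : E3) : aForm (-x) X = aForm x X := by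
  unfold aForm; rw [norm_neg, inner_neg_left]; ring

lemma aForm_abs_le (x X : E3) : |aForm x X| ≤ 2 * (‖x‖^2 * ‖X‖^2) := by
  have h := abs_real_inner_le_norm x X
  have h2 : (inner ℝ x X : ℝ)^2 ≤ (‖x‖*‖X‖)^2 := by
    rw [← sq_abs]; exact pow_le_pow_left₀ (abs_nonneg _) h 2
  unfold aForm
  rw [abs_le]
  constructor <;> nlinarith [sq_nonneg (inner ℝ x X : ℝ), norm_nonneg x, norm_nonneg X,
    sq_nonneg (‖x‖*‖X‖)]

lemma norm_sub_poly (v w : E3) : ‖v - w‖^2 ≤ (1+‖v‖)^2 * (1+‖w‖)^2 := by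
  have h := norm_sub_le v w
  nlinarith [norm_nonneg v, norm_nonneg w, norm_nonneg (v - w),
    mul_nonneg (norm_nonneg v) (norm_nonneg w), sq_nonneg (‖v‖*‖w‖),
    mul_nonneg (mul_nonneg (norm_nonneg v) (norm_nonneg v)) (norm_nonneg w),
    mul_nonneg (mul_nonneg (norm_nonneg v) (norm_nonneg w)) (norm_nonneg w)]

lemma cfun_decomp (f : E3 → ℝ) (v a w : E3) :
    ‖v - w‖^2 * (inner ℝ a (gradient f w) : ℝ)
        - (inner ℝ (v - w) a : ℝ) * (inner ℝ (v - w) (gradient f w) : ℝ)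
      = ∑ i, cfun v a i w * fderiv ℝ f w (ee i) := by
  rw [norm_sq_coords, inner_coords, inner_coords, inner_coords]
  simp only [sub_apply', grad_coord]
  rw [Finset.mul_sum, Finset.mul_sum, ← Finset.sum_sub_distrib]
  refine Finset.sum_congr rfl fun i _ => ?_
  unfold cfun; ring

/-! ### Schwartz function machinery, integrability, integration by parts -/

section schwartz
variable {f : E3 → ℝ} (hsmooth : ContDiff ℝ (⊤ : ℕ∞) f)
  (hdecay : ∀ k n : ℕ, ∃ C : ℝ, ∀ x, ‖x‖ ^ k * ‖iteratedFDeriv ℝ n f x‖ ≤ C)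

def mkS : 𝓢(E3, ℝ) := ⟨f, hsmooth.of_le (by simp), hdecay⟩

lemma integrable_helper (φ : 𝓢(E3, ℝ)) {h : E3 → ℝ} (hm : AEStronglyMeasurable h volume)
    (k : ℕ) (C : ℝ) (hb : ∀ x, |h x| ≤ C * ((1 + ‖x‖) ^ k * |φ x|)) : Integrable h := by
  have h1 : Integrable (fun x : E3 => (1 + ‖x‖) ^ k * |φ x|) := by
    have he : (fun x : E3 => (1 + ‖x‖) ^ k * |φ x|)
        = fun x : E3 => ∑ i ∈ Finset.range (k+1), (k.choose i : ℝ) * (‖x‖ ^ i * |φ x|) := by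
      funext x
      rw [add_comm (1:ℝ), add_pow, Finset.sum_mul]
      congr 1; funext i; ring
    rw [he]
    exact integrable_finset_sum _ fun i _ => by
      simpa [Real.norm_eq_abs] using ((φ.integrable_pow_mul volume i).const_mul (k.choose i : ℝ))
  exact (h1.const_mul C).mono' hm (Filter.Eventually.of_forall fun x => by
    simpa [Real.norm_eq_abs, mul_assoc] using hb x)

lemma integrable_poly_mul (φ : 𝓢(E3, ℝ)) (P : E3 → ℝ) (hPc : Continuous P) (k : ℕ) (C : ℝ)
    (hb : ∀ x, |P x| ≤ C * (1 + ‖x‖) ^ k) : Integrable (fun x => P x * φ x) := by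
  refine integrable_helper φ ((hPc.mul φ.continuous).aestronglyMeasurable) k C fun x => ?_
  rw [abs_mul, ← mul_assoc]
  exact mul_le_mul_of_nonneg_right (hb x) (abs_nonneg _)

include hsmooth hdecay

lemma integrable_poly_mul_f (P : E3 → ℝ) (hPc : Continuous P) (k : ℕ) (C : ℝ)
    (hb : ∀ x, |P x| ≤ C * (1 + ‖x‖) ^ k) : Integrable (fun x => P x * f x) :=
  integrable_poly_mul (mkS hsmooth hdecay) P hPc k C hb

lemma integrable_poly_mul_df (j : Fin 3) (P : E3 → ℝ) (hPc : Continuous P) (k : ℕ) (C : ℝ)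
    (hb : ∀ x, |P x| ≤ C * (1 + ‖x‖) ^ k) :
    Integrable (fun x => P x * fderiv ℝ f x (ee j)) :=
  integrable_poly_mul (LineDeriv.lineDerivOp (ee j) (mkS hsmooth hdecay) : 𝓢(E3, ℝ)) P hPc k C hb

lemma ibp_gen (j : Fin 3) (P : E3 → ℝ) (P' : E3 → E3 →L[ℝ] ℝ)
    (hP : ∀ x, HasFDerivAt P (P' x) x)
    (hP'c : Continuous fun x => P' x (ee j))
    (k : ℕ) (C : ℝ) (hbP : ∀ x, |P x| ≤ C * (1 + ‖x‖) ^ k)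
    (hbP' : ∀ x, |P' x (ee j)| ≤ C * (1 + ‖x‖) ^ k) :
    ∫ x, P x * fderiv ℝ f x (ee j) = - ∫ x, P' x (ee j) * f x := by
  have hPc : Continuous P := continuous_iff_continuousAt.2 fun x => (hP x).continuousAt
  have hfd : Differentiable ℝ f := hsmooth.differentiable (by simp)
  have hrw : ∀ x, fderiv ℝ P x (ee j) = P' x (ee j) := fun x => by rw [(hP x).fderiv]
  have h1 : Integrable (fun x => fderiv ℝ P x (ee j) * f x) := by
    refine (integrable_poly_mul_f hsmooth hdecay _ hP'c k C hbP').congr ?_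
    exact Filter.Eventually.of_forall fun x => by simp only [hrw x]
  have h2 : Integrable (fun x => P x * fderiv ℝ f x (ee j)) :=
    integrable_poly_mul_df hsmooth hdecay j P hPc k C hbP
  have h3 : Integrable (fun x => P x * f x) := integrable_poly_mul_f hsmooth hdecay P hPc k C hbP
  have h := integral_mul_fderiv_eq_neg_fderiv_mul_of_integrable h1 h2 h3
    (fun x _ => (hP x).differentiableAt) (fun x _ => hfd x)
  rw [h]
  congr 1
  exact integral_congr_ae (Filter.Eventually.of_forall fun x => by simp only [hrw x])

lemma int_pderiv_zero (j : Fin 3) : ∫ x, fderiv ℝ f x (ee j) = 0 := by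
  have h := ibp_gen hsmooth hdecay j (fun _ => 1) (fun _ => 0)
    (fun x => hasFDerivAt_const 1 x) (by continuity) 0 1 (by simp) (by simp)
  simpa using h

lemma int_coord_pderiv (i j : Fin 3) :
    ∫ x, x i * fderiv ℝ f x (ee j) = -((if i = j then (1:ℝ) else 0) * ∫ x, f x) := by
  have hcoe : (fun w : E3 => w i) = pj i := rfl
  have hP : ∀ x : E3, HasFDerivAt (fun w : E3 => w i) (pj i) x := fun x => by
    rw [hcoe]; exact (pj i).hasFDerivAt
  have h := ibp_gen hsmooth hdecay j (fun w : E3 => w i) (fun _ => pj i) hP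
    (by continuity) 1 1 ?_ ?_
  · rw [h]
    simp only [pj_ee]
    rw [MeasureTheory.integral_const_mul]
  · intro x
    have := coord_abs_le x i
    have := norm_nonneg x
    simpa using by linarith
  · intro x
    rw [pj_ee]
    have := norm_nonneg x
    split <;> simp <;> linarith

/-- The inner integration-by-parts computation, for a fixed `v` and `a`. -/
lemma inner_int (v a : E3) :
    ∫ w, (‖v - w‖^2 * (inner ℝ a (gradient f w) : ℝ)
        - (inner ℝ (v - w) a : ℝ) * (inner ℝ (v - w) (gradient f w) : ℝ))
      = -2 * ∑ k, (v k * ∫ x, f x) * a k + 2 * ∑ k, (∫ x, x k * f x) * a k := by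
  have hC2 : (0:ℝ) ≤ 6 * ‖a‖ * (1 + ‖v‖)^2 := by positivity
  have hbc : ∀ i (w : E3), |cfun v a i w| ≤ (6 * ‖a‖ * (1 + ‖v‖)^2) * (1 + ‖w‖) ^ 2 :=
    fun i w => cfun_bound v a i w
  have hbD : ∀ i j (w : E3), |cD v a i w (ee j)| ≤ (6 * ‖a‖ * (1 + ‖v‖)^2) * (1 + ‖w‖) ^ 2 := by
    intro i j w
    refine (cD_bound v a i j w).trans ?_
    have h1 : (0:ℝ) ≤ ‖a‖ := norm_nonneg a
    have h2 : (0:ℝ) ≤ ‖v‖ := norm_nonneg v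
    have h3 : (0:ℝ) ≤ ‖w‖ := norm_nonneg w
    have e1 : (1+‖v‖) ≤ (1+‖v‖)^2 := by nlinarith
    have e2 : (1+‖w‖) ≤ (1+‖w‖)^2 := by nlinarith
    have e3 : (1+‖v‖) * (1+‖w‖) ≤ (1+‖v‖)^2 * (1+‖w‖)^2 :=
      mul_le_mul e1 e2 (by positivity) (by positivity)
    nlinarith [e3]
  have hpt : ∀ w, ‖v - w‖^2 * (inner ℝ a (gradient f w) : ℝ)
      - (inner ℝ (v - w) a : ℝ) * (inner ℝ (v - w) (gradient f w) : ℝ)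
      = ∑ i, cfun v a i w * fderiv ℝ f w (ee i) := cfun_decomp f v a
  have hInt : ∀ i : Fin 3, Integrable fun w => cfun v a i w * fderiv ℝ f w (ee i) := fun i =>
    integrable_poly_mul_df hsmooth hdecay i _ (cfun_continuous v a i) 2 _ (hbc i)
  calc ∫ w, (‖v - w‖^2 * (inner ℝ a (gradient f w) : ℝ)
        - (inner ℝ (v - w) a : ℝ) * (inner ℝ (v - w) (gradient f w) : ℝ))
      = ∫ w, ∑ i, cfun v a i w * fderiv ℝ f w (ee i) := by
        exact integral_congr_ae (Filter.Eventually.of_forall fun w => hpt w)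
    _ = ∑ i, ∫ w, cfun v a i w * fderiv ℝ f w (ee i) :=
        integral_finset_sum _ fun i _ => hInt i
    _ = ∑ i : Fin 3, -∫ w, cD v a i w (ee i) * f w := by
        refine Finset.sum_congr rfl fun i _ => ?_
        exact ibp_gen hsmooth hdecay i (cfun v a i) (cD v a i) (hasFDerivAt_cfun v a i)
          (cD_continuous v a i i) 2 _ (hbc i) (hbD i i)
    _ = -∑ i : Fin 3, ∫ w, cD v a i w (ee i) * f w := by rw [Finset.sum_neg_distrib]
    _ = -∫ w, ∑ i : Fin 3, cD v a i w (ee i) * f w := by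
        rw [integral_finset_sum _ fun i _ =>
          integrable_poly_mul_f hsmooth hdecay _ (cD_continuous v a i i) 2 _ (hbD i i)]
    _ = -∫ w, ∑ k : Fin 3, (2 * (v k * a k) * f w - 2 * a k * (w k * f w)) := by
        congr 1
        refine integral_congr_ae (Filter.Eventually.of_forall fun w => ?_)
        show (∑ i : Fin 3, cD v a i w (ee i) * f w)
          = ∑ k : Fin 3, (2 * (v k * a k) * f w - 2 * a k * (w k * f w))
        rw [← Finset.sum_mul, cfun_div, Finset.mul_sum, Finset.sum_mul]
        refine Finset.sum_congr rfl fun k _ => ?_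
        ring
    _ = -2 * ∑ k, (v k * ∫ x, f x) * a k + 2 * ∑ k, (∫ x, x k * f x) * a k := by
        have hfint : Integrable f := (mkS hsmooth hdecay).integrable (μ := volume)
        have hcb : ∀ (i : Fin 3) (x : E3), |x i| ≤ 1 * (1 + ‖x‖) ^ 1 := fun i x => by
          have := coord_abs_le x i
          have := norm_nonneg x
          simpa using by linarith
        have intB : ∀ k : Fin 3, Integrable (fun w : E3 => w k * f w) := fun k =>
          integrable_poly_mul_f hsmooth hdecay _ (hcont_coord k) 1 1 (hcb k)
        have hsplit := integral_finset_sum (μ := volume) Finset.univ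
          (f := fun (k : Fin 3) (w : E3) => 2 * (v k * a k) * f w - 2 * a k * (w k * f w))
          (fun k _ => (hfint.const_mul _).sub ((intB k).const_mul _))
        rw [hsplit]
        have hterm : ∀ k : Fin 3, ∫ w, (2 * (v k * a k) * f w - 2 * a k * (w k * f w))
            = 2 * (v k * a k) * (∫ x, f x) - 2 * a k * ∫ x, x k * f x := by
          intro k
          rw [integral_sub (hfint.const_mul _) ((intB k).const_mul _),
            MeasureTheory.integral_const_mul, MeasureTheory.integral_const_mul]
        simp only [hterm]
        rw [Finset.mul_sum, Finset.mul_sum, ← Finset.sum_add_distrib, ← Finset.sum_neg_distrib]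
        exact Finset.sum_congr rfl fun k _ => by ring

lemma integrable_pderiv (j : Fin 3) : Integrable (fun v : E3 => fderiv ℝ f v (ee j)) := by
  have h := integrable_poly_mul_df hsmooth hdecay j (fun _ => (1:ℝ)) continuous_const 0 1
    (by simp)
  simpa using h

lemma integrable_coord_pderiv (i j : Fin 3) :
    Integrable (fun v : E3 => v i * fderiv ℝ f v (ee j)) := by
  refine integrable_poly_mul_df hsmooth hdecay j _ (hcont_coord i) 1 1 fun x => ?_
  have := coord_abs_le x i
  have := norm_nonneg x
  simpa using by linarith

lemma outer_int (hprob : ∫ x, f x = 1) :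
    ∫ v, (-2 * ∑ k, (v k * ∫ x, f x) * fderiv ℝ f v (ee k)
      + 2 * ∑ k, (∫ x, x k * f x) * fderiv ℝ f v (ee k)) = 6 := by
  have hA : Integrable (fun v : E3 => ∑ k, (v k * ∫ x, f x) * fderiv ℝ f v (ee k)) := by
    refine integrable_finset_sum _ fun k _ => ?_
    simp only [hprob, mul_one]
    exact integrable_coord_pderiv hsmooth hdecay k k
  have hB : Integrable (fun v : E3 => ∑ k, (∫ x, x k * f x) * fderiv ℝ f v (ee k)) :=
    integrable_finset_sum _ fun k _ =>
      (integrable_pderiv hsmooth hdecay k).const_mul _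
  rw [integral_add (hA.const_mul _) (hB.const_mul _), MeasureTheory.integral_const_mul,
    MeasureTheory.integral_const_mul,
    integral_finset_sum _ fun k _ => by
      simpa only [hprob, mul_one] using integrable_coord_pderiv hsmooth hdecay k k,
    integral_finset_sum _ fun k _ => (integrable_pderiv hsmooth hdecay k).const_mul _]
  have e1 : ∀ k : Fin 3, ∫ v, (v k * ∫ x, f x) * fderiv ℝ f v (ee k) = -1 := by
    intro k
    simp only [hprob, mul_one]
    rw [int_coord_pderiv hsmooth hdecay k k, hprob]
    simp
  have e2 : ∀ k : Fin 3, ∫ v, (∫ x, x k * f x) * fderiv ℝ f v (ee k)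
      = (∫ x, x k * f x) * ∫ v, fderiv ℝ f v (ee k) := fun k =>
    MeasureTheory.integral_const_mul _ _
  simp only [e1]
  rw [Finset.sum_congr rfl fun k _ => (e2 k).trans
    (by rw [int_pderiv_zero hsmooth hdecay k, mul_zero])]
  norm_num

end schwartz

end Stmt19Aux

open Stmt19Aux

/-- Let `f` be a smooth positive rapidly decaying probability density on `ℝ³`
with finite Fisher information `I(f) = ∫ |∇ log f|² f`. Then
`∫∫ f(v) f(w) a(v−w) : (∇log f(v) − ∇log f(w))^{⊗2} dv dw
  = 2 ∫∫ f(v) f(w) a(v−w) : (∇log f(v))^{⊗2} dv dw − 12`,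
where `a(x) = |x|² Id − x ⊗ x`, assuming all the integrals converge. -/
theorem stmt19 (f : EuclideanSpace ℝ (Fin 3) → ℝ)
    (hsmooth : ContDiff ℝ (⊤ : ℕ∞) f) (hpos : ∀ v, 0 < f v)
    (hdecay : ∀ k n : ℕ, ∃ C : ℝ, ∀ x, ‖x‖ ^ k * ‖iteratedFDeriv ℝ n f x‖ ≤ C)
    (hprob : ∫ v, f v = 1)
    (hFisher : Integrable (fun v => f v * ‖gradLog f v‖ ^ 2))
    (h1 : Integrable (fun p : EuclideanSpace ℝ (Fin 3) × EuclideanSpace ℝ (Fin 3) =>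
      f p.1 * f p.2 * aForm (p.1 - p.2) (gradLog f p.1 - gradLog f p.2)))
    (h2 : Integrable (fun p : EuclideanSpace ℝ (Fin 3) × EuclideanSpace ℝ (Fin 3) =>
      f p.1 * f p.2 * aForm (p.1 - p.2) (gradLog f p.1))) :
    (∫ v, ∫ w, f v * f w * aForm (v - w) (gradLog f v - gradLog f w))
      = 2 * (∫ v, ∫ w, f v * f w * aForm (v - w) (gradLog f v)) - 12 := by
  classical
  have hXG : ∀ x, f x • gradLog f x = gradient f x := smul_gradLog f hsmooth hpos
  -- T3, the cross term
  set T3 : E3 → E3 → ℝ := fun v w =>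
    ‖v - w‖^2 * (inner ℝ (gradient f v) (gradient f w) : ℝ)
      - (inner ℝ (v - w) (gradient f v) : ℝ) * (inner ℝ (v - w) (gradient f w) : ℝ) with hT3def
  -- pointwise key identity
  have key : ∀ v w : E3, f v * f w * aForm (v - w) (gradLog f v - gradLog f w)
      = f v * f w * aForm (v - w) (gradLog f v) + f v * f w * aForm (v - w) (gradLog f w)
        - 2 * T3 v w := by
    intro v w
    have e1 : ‖gradLog f v - gradLog f w‖^2
        = ‖gradLog f v‖^2 - 2 * (inner ℝ (gradLog f v) (gradLog f w) : ℝ) + ‖gradLog f w‖^2 :=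
      norm_sub_sq_real _ _
    have e2 : (inner ℝ (v - w) (gradLog f v - gradLog f w) : ℝ)
        = (inner ℝ (v - w) (gradLog f v) : ℝ) - (inner ℝ (v - w) (gradLog f w) : ℝ) :=
      inner_sub_right _ _ _
    have e3 : (inner ℝ (gradient f v) (gradient f w) : ℝ)
        = f v * (f w * (inner ℝ (gradLog f v) (gradLog f w) : ℝ)) := by
      rw [← hXG v, ← hXG w, real_inner_smul_left, real_inner_smul_right]
    have e4 : (inner ℝ (v - w) (gradient f v) : ℝ) = f v * (inner ℝ (v - w) (gradLog f v) : ℝ) := by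
      rw [← hXG v, real_inner_smul_right]
    have e5 : (inner ℝ (v - w) (gradient f w) : ℝ) = f w * (inner ℝ (v - w) (gradLog f w) : ℝ) := by
      rw [← hXG w, real_inner_smul_right]
    simp only [hT3def, aForm]
    rw [e1, e2, e3, e4, e5]
    ring
  -- integrability of sections in w (for every v)
  have hsec1 : ∀ v : E3, Integrable (fun w => f v * f w * aForm (v - w) (gradLog f v)) := by
    intro v
    have hc : Continuous fun w : E3 => f v * aForm (v - w) (gradLog f v) := by
      unfold aForm
      exact continuous_const.mul
        ((((continuous_const.sub continuous_id).norm.pow 2).mul continuous_const).sub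
          (((continuous_const.sub continuous_id).inner continuous_const).pow 2))
    have hb : ∀ w : E3, |f v * aForm (v - w) (gradLog f v)|
        ≤ (|f v| * (2 * ‖gradLog f v‖^2) * (1 + ‖v‖)^2) * (1 + ‖w‖)^2 := by
      intro w
      rw [abs_mul]
      have h3 := aForm_abs_le (v - w) (gradLog f v)
      have h4 := norm_sub_poly v w
      calc |f v| * |aForm (v - w) (gradLog f v)|
          ≤ |f v| * (2 * (‖v - w‖^2 * ‖gradLog f v‖^2)) :=
            mul_le_mul_of_nonneg_left h3 (abs_nonneg _)
        _ ≤ |f v| * (2 * (((1 + ‖v‖)^2 * (1 + ‖w‖)^2) * ‖gradLog f v‖^2)) := by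
            have h8 : ‖v - w‖^2 * ‖gradLog f v‖^2
                ≤ ((1 + ‖v‖)^2 * (1 + ‖w‖)^2) * ‖gradLog f v‖^2 :=
              mul_le_mul_of_nonneg_right h4 (sq_nonneg _)
            nlinarith [abs_nonneg (f v)]
        _ = (|f v| * (2 * ‖gradLog f v‖^2) * (1 + ‖v‖)^2) * (1 + ‖w‖)^2 := by ring
    have h := integrable_poly_mul_f hsmooth hdecay _ hc 2 _ hb
    exact h.congr (Filter.Eventually.of_forall fun w => by ring)
  have hsec3 : ∀ v : E3, Integrable (fun w => T3 v w) := by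
    intro v
    have hdec := cfun_decomp f v (gradient f v)
    have : Integrable (fun w => ∑ i, cfun v (gradient f v) i w * fderiv ℝ f w (ee i)) :=
      integrable_finset_sum _ fun i _ =>
        integrable_poly_mul_df hsmooth hdecay i _ (cfun_continuous v (gradient f v) i) 2 _
          (cfun_bound v (gradient f v) i)
    exact this.congr (Filter.Eventually.of_forall fun w => by rw [hT3def]; exact (hdec w).symm)
  -- a.e. integrability of the T2 section
  have hsec2 : ∀ᵐ v : E3, Integrable (fun w => f v * f w * aForm (v - w) (gradLog f w)) := by
    filter_upwards [h1.prod_right_ae] with v hv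
    have : Integrable (fun w => f v * f w * aForm (v - w) (gradLog f v - gradLog f w)
        - f v * f w * aForm (v - w) (gradLog f v) + 2 * T3 v w) :=
      (hv.sub (hsec1 v)).add ((hsec3 v).const_mul 2)
    exact this.congr (Filter.Eventually.of_forall fun w => by simp only [key v w]; ring)
  -- split the inner integral a.e.
  have hinner : ∀ᵐ v : E3, ∫ w, f v * f w * aForm (v - w) (gradLog f v - gradLog f w)
      = (∫ w, f v * f w * aForm (v - w) (gradLog f v))
        + (∫ w, f v * f w * aForm (v - w) (gradLog f w)) - 2 * ∫ w, T3 v w := by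
    filter_upwards [hsec2] with v hv2
    have hkey : (fun w => f v * f w * aForm (v - w) (gradLog f v - gradLog f w))
        =ᵐ[volume] fun w => f v * f w * aForm (v - w) (gradLog f v)
          + f v * f w * aForm (v - w) (gradLog f w) - 2 * T3 v w :=
      Filter.Eventually.of_forall (key v)
    have hadd : Integrable (fun w => f v * f w * aForm (v - w) (gradLog f v)
        + f v * f w * aForm (v - w) (gradLog f w)) volume := (hsec1 v).add hv2
    have h2T3 : Integrable (fun w => 2 * T3 v w) volume := (hsec3 v).const_mul 2
    rw [integral_congr_ae hkey, integral_sub hadd h2T3,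
      integral_add (hsec1 v) hv2, MeasureTheory.integral_const_mul]
  -- swapped version of h2
  have h2' : Integrable (fun p : E3 × E3 => f p.1 * f p.2 * aForm (p.1 - p.2) (gradLog f p.2))
      ((volume : Measure E3).prod volume) := by
    refine h2.swap.congr (Filter.Eventually.of_forall fun p => ?_)
    show f p.2 * f p.1 * aForm (p.2 - p.1) (gradLog f p.2) = _
    rw [← neg_sub p.1 p.2, aForm_even]
    ring
  -- outer integrability
  have hI1 : Integrable (fun v : E3 => ∫ w, f v * f w * aForm (v - w) (gradLog f v)) :=
    h2.integral_prod_left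
  have hI2 : Integrable (fun v : E3 => ∫ w, f v * f w * aForm (v - w) (gradLog f w)) :=
    h2'.integral_prod_left
  have hT3eq : (fun v : E3 => ∫ w, T3 v w)
      = fun v : E3 => -2 * ∑ k, (v k * ∫ x, f x) * fderiv ℝ f v (ee k)
          + 2 * ∑ k, (∫ x, x k * f x) * fderiv ℝ f v (ee k) := by
    funext v
    have h := inner_int hsmooth hdecay v (gradient f v)
    simp only [grad_coord] at h
    exact h
  have hI3 : Integrable (fun v : E3 => ∫ w, T3 v w) := by
    rw [hT3eq]
    refine Integrable.add ?_ ?_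
    · refine Integrable.const_mul ?_ _
      refine integrable_finset_sum _ fun k _ => ?_
      simp only [hprob, mul_one]
      exact integrable_coord_pderiv hsmooth hdecay k k
    · refine Integrable.const_mul ?_ _
      exact integrable_finset_sum _ fun k _ =>
        (integrable_pderiv hsmooth hdecay k).const_mul _
  -- the cross term integrates to 6
  have e6 : ∫ v, ∫ w, T3 v w = 6 := by
    rw [show (fun v : E3 => ∫ w, T3 v w) = _ from hT3eq]
    exact outer_int hsmooth hdecay hprob
  -- T2 double integral equals T1 double integral
  have e21 : ∫ v, ∫ w, f v * f w * aForm (v - w) (gradLog f w)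
      = ∫ v, ∫ w, f v * f w * aForm (v - w) (gradLog f v) := by
    calc ∫ v, ∫ w, f v * f w * aForm (v - w) (gradLog f w)
        = ∫ p : E3 × E3, f p.1 * f p.2 * aForm (p.1 - p.2) (gradLog f p.2)
            ∂((volume : Measure E3).prod volume) := (integral_prod _ h2').symm
      _ = ∫ p : E3 × E3, (fun q : E3 × E3 => f q.1 * f q.2 * aForm (q.1 - q.2) (gradLog f q.1))
            p.swap ∂((volume : Measure E3).prod volume) := by
          refine integral_congr_ae (Filter.Eventually.of_forall fun p => ?_)
          show _ = f p.2 * f p.1 * aForm (p.2 - p.1) (gradLog f p.2)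
          rw [← neg_sub p.1 p.2, aForm_even]
          ring
      _ = ∫ p : E3 × E3, f p.1 * f p.2 * aForm (p.1 - p.2) (gradLog f p.1)
            ∂((volume : Measure E3).prod volume) := by
          exact integral_prod_swap
            (fun q : E3 × E3 => f q.1 * f q.2 * aForm (q.1 - q.2) (gradLog f q.1))
      _ = ∫ v, ∫ w, f v * f w * aForm (v - w) (gradLog f v) := integral_prod _ h2
  -- put everything together
  calc (∫ v, ∫ w, f v * f w * aForm (v - w) (gradLog f v - gradLog f w))
      = ∫ v, ((∫ w, f v * f w * aForm (v - w) (gradLog f v))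
          + (∫ w, f v * f w * aForm (v - w) (gradLog f w)) - 2 * ∫ w, T3 v w) :=
        integral_congr_ae hinner
    _ = (∫ v, ∫ w, f v * f w * aForm (v - w) (gradLog f v))
          + (∫ v, ∫ w, f v * f w * aForm (v - w) (gradLog f w)) - 2 * ∫ v, ∫ w, T3 v w := by
        have hadd : Integrable (fun v : E3 => (∫ w, f v * f w * aForm (v - w) (gradLog f v))
            + (∫ w, f v * f w * aForm (v - w) (gradLog f w))) volume := hI1.add hI2
        have h2T3 : Integrable (fun v : E3 => 2 * ∫ w, T3 v w) volume := hI3.const_mul 2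
        rw [integral_sub hadd h2T3, integral_add hI1 hI2, MeasureTheory.integral_const_mul]
    _ = 2 * (∫ v, ∫ w, f v * f w * aForm (v - w) (gradLog f v)) - 12 := by
        rw [e21, e6]; ring

end
end
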